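/- Let 0 ≠ M ∈ ⋀X. Then M is a blade (i.e. M is a scalar or an exterior product v₁∧⋯∧v_p of vectors) if and only if isp M = osp M. -/

import Mathlib

open scoped RealInnerProductSpace

/-- The blade `v₁ ∧ ⋯ ∧ v_k` in the exterior algebra. -/
noncomputable def expBlade {X : Type*} [AddCommGroup X] [Module ℝ X] {k : ℕ}
    (v : Fin k → X) : ExteriorAlgebra ℝ X :=
  (List.ofFn fun i => ExteriorAlgebra.ι ℝ (v i)).prod

/-- A blade: a scalar, or an exterior product of vectors. -/
def IsBlade {X : Type*} [AddCommGroup X] [Module ℝ X] (B : ExteriorAlgebra ℝ X) : Prop :=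
  (∃ r : ℝ, B = algebraMap ℝ (ExteriorAlgebra ℝ X) r) ∨
    ∃ (k : ℕ) (v : Fin k → X), B = (List.ofFn fun i => ExteriorAlgebra.ι ℝ (v i)).prod

/-- The inner space of a multivector `M`: the subspace `{v ∈ X : v ∧ M = 0}`. -/
noncomputable def innerSpace {X : Type*} [AddCommGroup X] [Module ℝ X]
    (M : ExteriorAlgebra ℝ X) : Submodule ℝ X :=
  LinearMap.ker ((LinearMap.mulRight ℝ M).comp (ExteriorAlgebra.ι ℝ))

/-- The outer space of a multivector `M`: the intersection of all subspaces `V ⊆ X` such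
that `M` lies in the subalgebra of the exterior algebra generated by `V`. -/
noncomputable def outerSpace {X : Type*} [AddCommGroup X] [Module ℝ X]
    (M : ExteriorAlgebra ℝ X) : Submodule ℝ X :=
  sInf {V : Submodule ℝ X |
    M ∈ Algebra.adjoin ℝ (⇑(ExteriorAlgebra.ι ℝ (M := X)) '' (V : Set X))}

/-!
If `M ≠ 0` lies in the subalgebra `⋀V` generated by a subspace `V`, then every `v` with
`v ∧ M = 0` lies in `V`: otherwise contracting `v ∧ M` with a functional that vanishes on `V` but
not at `v` gives a nonzero multiple of `M`. Hence `isp M ≤ osp M`, and for a blade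
`v₁ ∧ ⋯ ∧ v_k` the span of the `vᵢ` lies between `osp M` and `isp M`.

Conversely, `⋀V ∩ ⋀W = ⋀(V ∩ W)`: a projection onto `W` that maps `V` into `V ∩ W` fixes `⋀W`
and maps `⋀V` into `⋀(V ∩ W)`. In finite dimension `osp M` is therefore the least `V` with
`M ∈ ⋀V`. If it equals `isp M`, then `M` comes from `⋀V` and `bᵢ ∧ M = 0` for a basis `(bᵢ)` of
`V`; in the basis of `⋀V` this kills every coordinate of `M` except the top one, so `M` is a
multiple of the blade `b₁ ∧ ⋯ ∧ b_k`.
-/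

theorem InfClosed.sInf_mem_of_wellFoundedLT {α : Type*} [CompleteLattice α] [WellFoundedLT α]
    {S : Set α} (hS : InfClosed S) (hne : S.Nonempty) : sInf S ∈ S := by
  obtain ⟨a, ha, hmin⟩ := wellFounded_lt.has_min S hne
  have ha_le : ∀ b ∈ S, a ≤ b := fun b hb =>
    inf_eq_left.mp ((inf_le_left.lt_or_eq).resolve_left (hmin _ (hS ha hb)))
  rwa [le_antisymm (sInf_le ha) (le_sInf ha_le)]

open ExteriorAlgebra Set.powersetCard

namespace ExteriorAlgebra

section CommRing

variable {R X Y : Type*} [CommRing R] [AddCommGroup X] [Module R X] [AddCommGroup Y] [Module R Y]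

theorem contractLeft_eq_zero_of_mem_adjoin {V : Submodule R X} {f : Module.Dual R X}
    (hf : ∀ v ∈ V, f v = 0) {M : ExteriorAlgebra R X}
    (hM : M ∈ Algebra.adjoin R (ι R '' (V : Set X))) :
    CliffordAlgebra.contractLeft (Q := 0) f M = 0 := by
  -- `contractLeft f` is not multiplicative, but its kernel is stable under left multiplication
  -- by elements of `⋀V`
  suffices ∀ N, CliffordAlgebra.contractLeft (Q := 0) f N = 0 →
      CliffordAlgebra.contractLeft (Q := 0) f (M * N) = 0 by
    simpa using this 1 (CliffordAlgebra.contractLeft_one _ f)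
  induction hM using Algebra.adjoin_induction with
  | mem x hx =>
    obtain ⟨v, hv, rfl⟩ := hx
    intro N hN
    rw [ExteriorAlgebra.ι, CliffordAlgebra.contractLeft_ι_mul, hf v hv, hN, zero_smul, mul_zero,
      sub_zero]
  | algebraMap r =>
    intro N hN
    rw [← Algebra.smul_def, map_smul, hN, smul_zero]
  | add x y _ _ hx hy =>
    intro N hN
    rw [add_mul, map_add, hx N hN, hy N hN, add_zero]
  | mul x y _ _ hx hy =>
    intro N hN
    rw [mul_assoc]
    exact hx _ (hy N hN)

theorem map_eq_self_of_mem_adjoin {W : Submodule R X} {p : X →ₗ[R] X} (hp : ∀ w ∈ W, p w = w)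
    {M : ExteriorAlgebra R X} (hM : M ∈ Algebra.adjoin R (ι R '' (W : Set X))) :
    map p M = M := by
  have hEq : Set.EqOn (map p) (AlgHom.id R _) (ι R '' (W : Set X)) := by
    rintro _ ⟨w, hw, rfl⟩
    rw [map_apply_ι, hp w hw, AlgHom.id_apply]
  exact AlgHom.eqOn_adjoin_iff.mpr hEq hM

theorem map_mem_adjoin_map {V : Submodule R X} (p : X →ₗ[R] Y) {M : ExteriorAlgebra R X}
    (hM : M ∈ Algebra.adjoin R (ι R '' (V : Set X))) :
    map p M ∈ Algebra.adjoin R (ι R '' (V.map p : Set Y)) := by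
  have himage : ι R '' (V.map p : Set Y) = map p '' (ι R '' (V : Set X)) := by
    rw [Submodule.map_coe, Set.image_image, Set.image_image]
    simp only [map_apply_ι]
  rw [himage, Algebra.adjoin_image]
  exact Subalgebra.mem_map.mpr ⟨M, hM, rfl⟩

theorem ιMulti_mem_adjoin_span_range {k : ℕ} (v : Fin k → X) :
    ιMulti R k v ∈ Algebra.adjoin R (ι R '' (Submodule.span R (Set.range v) : Set X)) := by
  rw [ιMulti_apply]
  refine Subalgebra.list_prod_mem _ fun x hx => ?_
  obtain ⟨i, rfl⟩ := List.mem_ofFn.mp hx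
  exact Algebra.subset_adjoin ⟨v i, Submodule.subset_span (Set.mem_range_self i), rfl⟩

theorem exists_map_subtype_eq_of_mem_adjoin {V : Submodule R X} {M : ExteriorAlgebra R X}
    (hM : M ∈ Algebra.adjoin R (ι R '' (V : Set X))) :
    ∃ M' : ExteriorAlgebra R V, map V.subtype M' = M := by
  refine Algebra.adjoin_le (S := (map V.subtype).range) ?_ hM
  rintro _ ⟨v, hv, rfl⟩
  exact ⟨ι R ⟨v, hv⟩, map_apply_ι _ _⟩

end CommRing

section Field

variable {K X : Type*} [Field K] [AddCommGroup X] [Module K X]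

theorem mem_of_ι_mul_eq_zero {V : Submodule K X} {M : ExteriorAlgebra K X}
    (hM : M ∈ Algebra.adjoin K (ι K '' (V : Set X))) (hM0 : M ≠ 0) {v : X}
    (hv : ι K v * M = 0) : v ∈ V := by
  by_contra hvV
  obtain ⟨f, hfv, hVf⟩ := Submodule.exists_le_ker_of_notMem hvV
  have := congrArg (CliffordAlgebra.contractLeft (Q := 0) f) hv
  rw [ExteriorAlgebra.ι, CliffordAlgebra.contractLeft_ι_mul,
    contractLeft_eq_zero_of_mem_adjoin (fun w hw => hVf hw) hM, mul_zero, sub_zero, map_zero,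
    smul_eq_zero] at this
  exact this.elim hfv hM0

theorem _root_.Submodule.exists_projection_map_le_inf (V W : Submodule K X) :
    ∃ p : X →ₗ[K] X, (∀ w ∈ W, p w = w) ∧ V.map p ≤ V ⊓ W := by
  obtain ⟨A, hdisj, hsup⟩ :=
    IsModularLattice.exists_disjoint_and_sup_eq (inf_le_left : V ⊓ W ≤ V)
  have hAW : Disjoint A W := by
    have hAV : A ≤ V := hsup ▸ le_sup_right
    exact disjoint_iff_inf_le.mpr fun x hx =>
      (disjoint_iff_inf_le.mp hdisj) ⟨⟨hAV hx.1, hx.2⟩, hx.1⟩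
  obtain ⟨C, hAC, hCW⟩ := hAW.exists_isCompl
  refine ⟨W.projection C hCW.symm, fun w hw => W.projection_apply_left hCW.symm ⟨w, hw⟩, ?_⟩
  nth_rw 1 [← hsup]
  rw [Submodule.map_sup, sup_le_iff]
  constructor
  · rintro _ ⟨u, hu, rfl⟩
    rwa [W.projection_apply_left hCW.symm ⟨u, hu.2⟩]
  · rintro _ ⟨a, ha, rfl⟩
    rw [W.projection_apply_right hCW.symm ⟨a, hAC ha⟩]
    exact zero_mem _

theorem mem_adjoin_inf {V W : Submodule K X} {M : ExteriorAlgebra K X}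
    (hV : M ∈ Algebra.adjoin K (ι K '' (V : Set X)))
    (hW : M ∈ Algebra.adjoin K (ι K '' (W : Set X))) :
    M ∈ Algebra.adjoin K (ι K '' ((V ⊓ W : Submodule K X) : Set X)) := by
  obtain ⟨p, hpW, hpV⟩ := V.exists_projection_map_le_inf W
  rw [← map_eq_self_of_mem_adjoin hpW hW]
  exact Algebra.adjoin_mono (Set.image_mono hpV) (map_mem_adjoin_map p hV)

end Field

section Basis

variable {K X I : Type*} [Field K] [AddCommGroup X] [Module K X] [LinearOrder I]
  (b : Module.Basis I K X)

theorem basis_singleton (i : I) : b.ExteriorAlgebra {i} = ι K (b i) := by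
  rw [basis_apply_ofCard b (Finset.card_singleton i)]
  have h0 : ofFinEmbEquiv.symm (ofCard (Finset.card_singleton i)) 0 = i :=
    Finset.mem_singleton.mp
      ((mem_range_ofFinEmbEquiv_symm_iff_mem (ofCard (Finset.card_singleton i)) _).mp ⟨0, rfl⟩)
  simp [ιMulti_apply, h0]

theorem ι_mul_basis_of_notMem {i : I} {s : Finset I} (hi : i ∉ s) :
    ∃ u : ℤˣ, ι K (b i) * b.ExteriorAlgebra s = u • b.ExteriorAlgebra (insert i s) := by
  let si : Set.powersetCard I 1 := ofCard (Finset.card_singleton i)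
  let ss : Set.powersetCard I s.card := ofCard rfl
  have hdisj : Disjoint si.val ss.val := Finset.disjoint_singleton_left.mpr hi
  refine ⟨Equiv.Perm.sign (permOfDisjoint hdisj), ?_⟩
  have hunion : (disjUnion hdisj : Finset I) = insert i s :=
    (Finset.disjUnion_eq_union _ _ hdisj).trans (Finset.insert_eq i s).symm
  have h := basis_mul_of_disjoint b si ss hdisj
  rw [hunion] at h
  rw [← basis_singleton]
  exact h

theorem ι_mul_basis_of_mem {i : I} {s : Finset I} (hi : i ∈ s) :
    ι K (b i) * b.ExteriorAlgebra s = 0 := by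
  rw [← basis_singleton]
  exact basis_mul_of_not_disjoint b (ofCard (Finset.card_singleton i)) (ofCard rfl)
    (Finset.not_disjoint_iff.mpr ⟨i, Finset.mem_singleton_self i, hi⟩)

theorem exists_basis_repr_ι_mul_insert {i : I} {s : Finset I} (hi : i ∉ s) :
    ∃ u : ℤˣ, ∀ M : ExteriorAlgebra K X,
      b.ExteriorAlgebra.repr (ι K (b i) * M) (insert i s) = u • b.ExteriorAlgebra.repr M s := by
  obtain ⟨u, hu⟩ := ι_mul_basis_of_notMem b hi
  refine ⟨u, fun M => LinearMap.congr_fun (b.ExteriorAlgebra.ext fun t => ?_ :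
    b.ExteriorAlgebra.coord (insert i s) ∘ₗ LinearMap.mulLeft K (ι K (b i)) =
      u • b.ExteriorAlgebra.coord s) M⟩
  by_cases hit : i ∈ t
  · have hts : t ≠ s := fun h => hi (h ▸ hit)
    simp [ι_mul_basis_of_mem b hit, hts]
  · obtain ⟨u', hu'⟩ := ι_mul_basis_of_notMem b hit
    by_cases hts : t = s
    · subst hts
      simp [hu]
    · have hits : insert i t ≠ insert i s := fun h => hts (by
        simpa [Finset.erase_insert hit, Finset.erase_insert hi] using congrArg (·.erase i) h)
      simp [hu', hts, hits]

theorem basis_repr_eq_zero_of_ι_mul_eq_zero {i : I} {s : Finset I} (hi : i ∉ s)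
    {M : ExteriorAlgebra K X} (hM : ι K (b i) * M = 0) : b.ExteriorAlgebra.repr M s = 0 := by
  obtain ⟨u, hu⟩ := exists_basis_repr_ι_mul_insert b hi
  rw [← smul_eq_zero_iff_eq u, ← hu, hM, map_zero, Finsupp.zero_apply]

theorem eq_smul_basis_univ_of_forall_ι_mul_eq_zero [Fintype I] {M : ExteriorAlgebra K X}
    (hM : ∀ i, ι K (b i) * M = 0) :
    M = b.ExteriorAlgebra.repr M Finset.univ • b.ExteriorAlgebra Finset.univ := by
  conv_lhs => rw [← b.ExteriorAlgebra.sum_repr M]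
  refine Finset.sum_eq_single _ (fun s _ hs => ?_) (by simp)
  obtain ⟨i, hi⟩ : ∃ i, i ∉ s := by
    by_contra! h
    exact hs (Finset.eq_univ_iff_forall.mpr h)
  rw [basis_repr_eq_zero_of_ι_mul_eq_zero b hi (hM i), zero_smul]

end Basis

end ExteriorAlgebra

section Blade

variable {X Y : Type*} [AddCommGroup X] [Module ℝ X] [AddCommGroup Y] [Module ℝ Y]

theorem isBlade_iff_ιMulti {B : ExteriorAlgebra ℝ X} :
    IsBlade B ↔
      (∃ r : ℝ, B = algebraMap ℝ _ r) ∨ ∃ (k : ℕ) (v : Fin k → X), B = ιMulti ℝ k v := by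
  simp only [IsBlade, ιMulti_apply]

theorem isBlade_ιMulti {k : ℕ} (v : Fin k → X) : IsBlade (ιMulti ℝ k v) :=
  isBlade_iff_ιMulti.mpr (Or.inr ⟨k, v, rfl⟩)

theorem IsBlade.smul {B : ExteriorAlgebra ℝ X} (hB : IsBlade B) (c : ℝ) : IsBlade (c • B) := by
  rcases isBlade_iff_ιMulti.mp hB with ⟨r, rfl⟩ | ⟨_ | k, v, rfl⟩
  · exact isBlade_iff_ιMulti.mpr (Or.inl ⟨c * r, by rw [map_mul, Algebra.smul_def]⟩)
  · refine isBlade_iff_ιMulti.mpr (Or.inl ⟨c, ?_⟩)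
    rw [ιMulti_zero_apply, Algebra.algebraMap_eq_smul_one]
  · rw [← Function.update_eq_self 0 v, ← AlternatingMap.map_update_smul]
    exact isBlade_ιMulti _

theorem IsBlade.map {B : ExteriorAlgebra ℝ X} (hB : IsBlade B) (f : X →ₗ[ℝ] Y) :
    IsBlade (ExteriorAlgebra.map f B) := by
  rcases isBlade_iff_ιMulti.mp hB with ⟨r, rfl⟩ | ⟨k, v, rfl⟩
  · exact isBlade_iff_ιMulti.mpr (Or.inl ⟨r, AlgHom.commutes _ r⟩)
  · rw [map_apply_ιMulti]
    exact isBlade_ιMulti _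

theorem isBlade_basis {I : Type*} [LinearOrder I] (b : Module.Basis I ℝ X) (s : Finset I) :
    IsBlade (b.ExteriorAlgebra s) := by
  rw [basis_apply]
  exact isBlade_ιMulti _

theorem isBlade_of_le_innerSpace {V : Submodule ℝ X} [FiniteDimensional ℝ V]
    {M : ExteriorAlgebra ℝ X} (hM : M ∈ Algebra.adjoin ℝ (ι ℝ '' (V : Set X)))
    (hV : V ≤ innerSpace M) : IsBlade M := by
  obtain ⟨M', rfl⟩ := exists_map_subtype_eq_of_mem_adjoin hM
  let b := Module.finBasis ℝ V
  have hM' : ∀ i, ι ℝ (b i) * M' = 0 := fun i =>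
    map_injective_field V.ker_subtype (by rw [map_mul, map_apply_ι, map_zero]; exact hV (b i).2)
  rw [eq_smul_basis_univ_of_forall_ι_mul_eq_zero b hM', map_smul]
  exact ((isBlade_basis b _).map _).smul _

end Blade

section InnerOuter

variable {X : Type*} [AddCommGroup X] [Module ℝ X]

theorem mem_innerSpace {M : ExteriorAlgebra ℝ X} {v : X} : v ∈ innerSpace M ↔ ι ℝ v * M = 0 :=
  Iff.rfl

theorem span_range_le_innerSpace {k : ℕ} (v : Fin k → X) :
    Submodule.span ℝ (Set.range v) ≤ innerSpace (ιMulti ℝ k v) := by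
  rw [Submodule.span_le]
  rintro _ ⟨i, rfl⟩
  rw [SetLike.mem_coe, mem_innerSpace, ιMulti_apply]
  exact ι_mul_prod_list v i

theorem innerSpace_le_outerSpace {M : ExteriorAlgebra ℝ X} (hM : M ≠ 0) :
    innerSpace M ≤ outerSpace M :=
  le_sInf fun _ hV _ hv => mem_of_ι_mul_eq_zero hV hM (mem_innerSpace.mp hv)

theorem outerSpace_le_of_mem_adjoin {M : ExteriorAlgebra ℝ X} {V : Submodule ℝ X}
    (hM : M ∈ Algebra.adjoin ℝ (ι ℝ '' (V : Set X))) : outerSpace M ≤ V :=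
  sInf_le hM

theorem mem_adjoin_outerSpace [FiniteDimensional ℝ X] (M : ExteriorAlgebra ℝ X) :
    M ∈ Algebra.adjoin ℝ (ι ℝ '' (outerSpace M : Set X)) := by
  let S := {V : Submodule ℝ X | M ∈ Algebra.adjoin ℝ (ι ℝ '' (V : Set X))}
  have hS : InfClosed S := fun _ hV _ hW => mem_adjoin_inf hV hW
  have htop : ⊤ ∈ S := by
    change M ∈ Algebra.adjoin ℝ (ι ℝ '' Set.univ)
    rw [Set.image_univ, ExteriorAlgebra.ι, CliffordAlgebra.adjoin_range_ι]
    exact Algebra.mem_top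
  exact hS.sInf_mem_of_wellFoundedLT ⟨⊤, htop⟩

end InnerOuter

/-- a nonzero multivector is a blade iff its inner and outer spaces agree. -/
theorem stmt17 {X : Type*} [NormedAddCommGroup X] [InnerProductSpace ℝ X]
    [FiniteDimensional ℝ X]
    (M : ExteriorAlgebra ℝ X) (hM : M ≠ 0) :
    IsBlade M ↔ innerSpace M = outerSpace M := by
  refine ⟨fun hB => le_antisymm (innerSpace_le_outerSpace hM) ?_, fun h => ?_⟩
  · rcases isBlade_iff_ιMulti.mp hB with ⟨r, rfl⟩ | ⟨k, v, rfl⟩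
    · exact (outerSpace_le_of_mem_adjoin (Subalgebra.algebraMap_mem _ r)).trans bot_le
    · exact (outerSpace_le_of_mem_adjoin (ιMulti_mem_adjoin_span_range v)).trans
        (span_range_le_innerSpace v)
  · exact isBlade_of_le_innerSpace (mem_adjoin_outerSpace M) h.ge
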